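/- arXiv:1611.01092 — 2 statements merged into one kernel-verified Lean document; each statement's English description precedes it below -/
import Mathlib

section
/- Let n = 3, P = ℚ[X₁,…,X₆], and for I ⊆ {1,…,6} with |I| = k set R_I = ∑_{ν=0}^{⌊(k−1)/2⌋} e_{k−1−2ν}(Xᵢ : i∈I)·X₁^{2ν} and S_I = ∑_{ν=0}^{⌊k/2⌋} e_{k−2ν}(Xᵢ : i∈I)·X₁^{2ν}. Let 𝔞⁺ be the ideal of P generated by all Xᵢ² − Xⱼ², all R_I, S_I with |I| = 4, and all R_I, S_I with |I| = 3 and 1 ∈ I. Then for every a₁,…,a₆ ∈ ℚ, if (a₁X₁ + ⋯ + a₆X₆)² ∈ 𝔞⁺ then a₁ = ⋯ = a₆ = 0. -/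
/-!
Substitute `Xᵢ ↦ bᵢ t` for a sign vector `b ∈ {±1}⁶`. Every generator of `𝔞⁺` is homogeneous, so it
goes to its value at `b` times a power of `t`: the generators of degree at least 3 land in `(t³)`,
`Xᵢ² − Xⱼ²` vanishes at `b`, and for `I = {0, j, k}` one has `R_I = (X₀ + Xⱼ)(X₀ + Xₖ)`, which vanishes
at `b` as soon as `bⱼ = −b₀` or `bₖ = −b₀`. For such `b` the image of `(∑ aᵢXᵢ)²`, namely
`(∑ aᵢbᵢ)² t²`, lies in `(t³)`, so `∑ aᵢbᵢ = 0`. The six vectors with `b₀ = 1` and at most one further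
entry `+1` give a system forcing `a = 0`.
-/

open MvPolynomial Finset

noncomputable section

/-- e_j(Xᵢ : i ∈ I), the elementary symmetric polynomial in the variables indexed by I. -/
def esF {N : ℕ} (I : Finset (Fin N)) (j : ℕ) : MvPolynomial (Fin N) ℚ :=
  ∑ J ∈ powersetCard j I, ∏ i ∈ J, X i

/-- R_I = ∑_{ν=0}^{⌊(|I|−1)/2⌋} e_{|I|−1−2ν}(Xᵢ : i∈I)·X₁^{2ν}. -/
def RI {N : ℕ} (z : MvPolynomial (Fin N) ℚ) (I : Finset (Fin N)) : MvPolynomial (Fin N) ℚ :=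
  ∑ ν ∈ range ((I.card - 1) / 2 + 1), esF I (I.card - 1 - 2 * ν) * z ^ (2 * ν)

/-- S_I = ∑_{ν=0}^{⌊|I|/2⌋} e_{|I|−2ν}(Xᵢ : i∈I)·X₁^{2ν}. -/
def SI {N : ℕ} (z : MvPolynomial (Fin N) ℚ) (I : Finset (Fin N)) : MvPolynomial (Fin N) ℚ :=
  ∑ ν ∈ range (I.card / 2 + 1), esF I (I.card - 2 * ν) * z ^ (2 * ν)

theorem MvPolynomial.IsHomogeneous.aeval_C_mul_X {σ R : Type*} [CommSemiring R]
    {φ : MvPolynomial σ R} {n : ℕ} (hφ : φ.IsHomogeneous n) (b : σ → R) :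
    MvPolynomial.aeval (fun i => Polynomial.C (b i) * Polynomial.X) φ =
      Polynomial.C (eval b φ) * Polynomial.X ^ n := by
  induction hφ using IsWeightedHomogeneous.induction_on with
  | zero => simp
  | add p q _ _ hp hq => simp [hp, hq, add_mul]
  | monomial d r hr =>
    subst hr
    simp only [aeval_monomial, eval_monomial, Finsupp.prod, Finsupp.weight_apply, Finsupp.sum,
      Pi.one_apply, smul_eq_mul, mul_one, mul_pow, Finset.prod_mul_distrib,
      Finset.prod_pow_eq_pow_sum, map_mul, map_prod, map_pow, Polynomial.algebraMap_eq]
    ring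

theorem MvPolynomial.IsHomogeneous.aeval_C_mul_X_mem_span_X_pow {σ R : Type*} [CommSemiring R]
    {φ : MvPolynomial σ R} {d n : ℕ} (hφ : φ.IsHomogeneous d) (b : σ → R)
    (h : n ≤ d ∨ eval b φ = 0) :
    MvPolynomial.aeval (fun i => Polynomial.C (b i) * Polynomial.X) φ ∈
      Ideal.span {Polynomial.X ^ n} := by
  rw [hφ.aeval_C_mul_X b, Ideal.mem_span_singleton]
  rcases h with h | h
  · exact (pow_dvd_pow _ h).mul_left _
  · simp [h]

theorem Polynomial.eq_zero_of_C_mul_X_pow_mem_span_X_pow_succ {R : Type*} [CommSemiring R]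
    {c : R} {n : ℕ}
    (h : Polynomial.C c * Polynomial.X ^ n ∈ Ideal.span {(Polynomial.X : Polynomial R) ^ (n + 1)}) :
    c = 0 := by
  rw [Ideal.mem_span_singleton, X_pow_dvd_iff] at h
  simpa using h n n.lt_succ_self

section esF

variable {N : ℕ}

theorem isHomogeneous_esF (I : Finset (Fin N)) (j : ℕ) : (esF I j).IsHomogeneous j := by
  refine IsHomogeneous.sum _ _ _ fun J hJ => ?_
  simpa [(mem_powersetCard.1 hJ).2] using
    IsHomogeneous.prod J (fun i => X i) (fun _ => 1) fun i _ => isHomogeneous_X ℚ i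

theorem isHomogeneous_RI {z : MvPolynomial (Fin N) ℚ} (hz : z.IsHomogeneous 1)
    (I : Finset (Fin N)) : (RI z I).IsHomogeneous (I.card - 1) := by
  refine IsHomogeneous.sum _ _ _ fun ν hν => ?_
  convert (isHomogeneous_esF I _).mul (hz.pow (2 * ν)) using 1
  have := mem_range.1 hν
  omega

theorem isHomogeneous_SI {z : MvPolynomial (Fin N) ℚ} (hz : z.IsHomogeneous 1)
    (I : Finset (Fin N)) : (SI z I).IsHomogeneous I.card := by
  refine IsHomogeneous.sum _ _ _ fun ν hν => ?_
  convert (isHomogeneous_esF I _).mul (hz.pow (2 * ν)) using 1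
  have := mem_range.1 hν
  omega

@[simp]
theorem esF_zero (I : Finset (Fin N)) : esF I 0 = 1 := by
  simp [esF]

@[simp]
theorem esF_empty_succ (j : ℕ) : esF (∅ : Finset (Fin N)) (j + 1) = 0 := by
  rw [esF, powersetCard_eq_empty.2 (by simp), sum_empty]

theorem esF_insert_succ {i : Fin N} {I : Finset (Fin N)} (hi : i ∉ I) (j : ℕ) :
    esF (insert i I) (j + 1) = esF I (j + 1) + X i * esF I j := by
  rw [esF, powersetCard_succ_insert hi, sum_union, sum_image]
  · simp only [esF, mul_sum]
    congr 1
    refine sum_congr rfl fun J hJ => prod_insert fun hiJ => hi ?_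
    exact (mem_powersetCard.1 hJ).1 hiJ
  · intro J hJ K hK hJK
    have hJ' : i ∉ J := fun h => hi ((mem_powersetCard.1 hJ).1 h)
    have hK' : i ∉ K := fun h => hi ((mem_powersetCard.1 hK).1 h)
    rw [← erase_insert hJ', ← erase_insert hK']
    exact congrArg (·.erase i) hJK
  · refine disjoint_left.2 fun J hJ hJ' => hi ?_
    obtain ⟨K, -, rfl⟩ := mem_image.1 hJ'
    exact (mem_powersetCard.1 hJ).1 (mem_insert_self i K)

theorem RI_triple {i j k : Fin N} (hij : i ≠ j) (hik : i ≠ k) (hjk : j ≠ k) :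
    RI (X i) {i, j, k} = (X i + X j) * (X i + X k) := by
  have hk : k ∉ (∅ : Finset (Fin N)) := notMem_empty k
  have hk1 : esF {k} 1 = X k := by
    rw [← insert_empty, esF_insert_succ hk]; simp
  have hk2 : esF {k} 2 = 0 := by
    rw [← insert_empty, esF_insert_succ hk]; simp
  have hj : j ∉ ({k} : Finset (Fin N)) := by simpa using hjk
  have hi : i ∉ ({j, k} : Finset (Fin N)) := by simp [hij, hik]
  have hcard : ({i, j, k} : Finset (Fin N)).card = 3 := by
    rw [card_insert_of_notMem hi, card_pair hjk]
  rw [RI, hcard]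
  simp [sum_range_succ, esF_insert_succ, hi, hj, hk1, hk2]
  ring

end esF

def aPlusGenerators (N : ℕ) [NeZero N] : Set (MvPolynomial (Fin N) ℚ) :=
  {f | ∃ i j : Fin N, f = X i ^ 2 - X j ^ 2} ∪
    {f | ∃ I : Finset (Fin N), I.card = 4 ∧ (f = RI (X 0) I ∨ f = SI (X 0) I)} ∪
    {f | ∃ I : Finset (Fin N), I.card = 3 ∧ (0 : Fin N) ∈ I ∧ (f = RI (X 0) I ∨ f = SI (X 0) I)}

section signVec

variable {N : ℕ} [NeZero N]

-- By `RI_triple`, every `R_I` with `|I| = 3` and `0 ∈ I` vanishes at these points.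
def signVec (m i : Fin N) : ℚ :=
  if i = 0 ∨ i = m then 1 else -1

theorem signVec_sq (m i : Fin N) : signVec m i ^ 2 = 1 := by
  unfold signVec; split_ifs <;> norm_num

theorem eval_signVec_RI {I : Finset (Fin N)} (hI : I.card = 3) (h0 : 0 ∈ I) (m : Fin N) :
    eval (signVec m) (RI (X 0) I) = 0 := by
  obtain ⟨j, k, hjk, hI'⟩ :=
    card_eq_two.1 (by rw [card_erase_of_mem h0, hI] : (I.erase 0).card = 2)
  have hj : j ≠ 0 := (mem_erase.1 (hI' ▸ mem_insert_self j {k})).1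
  have hk : k ≠ 0 := (mem_erase.1 (hI' ▸ mem_insert_of_mem (mem_singleton_self k))).1
  rw [← insert_erase h0, hI', RI_triple hj.symm hk.symm hjk]
  by_cases hjm : j = m
  · simp [signVec, hk, hjm ▸ hjk.symm]
  · simp [signVec, hj, hjm]

theorem aeval_signVec_mem_span_X_pow_three {f : MvPolynomial (Fin N) ℚ}
    (hf : f ∈ Ideal.span (aPlusGenerators N)) (m : Fin N) :
    aeval (fun i => Polynomial.C (signVec m i) * Polynomial.X) f ∈
      Ideal.span {Polynomial.X ^ 3} := by
  have hX0 : (X 0 : MvPolynomial (Fin N) ℚ).IsHomogeneous 1 := isHomogeneous_X ℚ 0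
  let ψ : MvPolynomial (Fin N) ℚ →ₐ[ℚ] Polynomial ℚ :=
    aeval fun i => Polynomial.C (signVec m i) * Polynomial.X
  refine (Ideal.span_le (I := (Ideal.span {Polynomial.X ^ 3}).comap ψ)).2 ?_ hf
  rintro f ((⟨i, j, rfl⟩ | ⟨I, hI, rfl | rfl⟩) | ⟨I, hI, h0, rfl | rfl⟩)
  · exact ((isHomogeneous_X_pow i 2).sub (isHomogeneous_X_pow j 2)).aeval_C_mul_X_mem_span_X_pow
      _ (Or.inr (by simp [signVec_sq]))
  · exact (isHomogeneous_RI hX0 I).aeval_C_mul_X_mem_span_X_pow _ (Or.inl (by omega))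
  · exact (isHomogeneous_SI hX0 I).aeval_C_mul_X_mem_span_X_pow _ (Or.inl (by omega))
  · exact (isHomogeneous_RI hX0 I).aeval_C_mul_X_mem_span_X_pow _
      (Or.inr (eval_signVec_RI hI h0 m))
  · exact (isHomogeneous_SI hX0 I).aeval_C_mul_X_mem_span_X_pow _ (Or.inl (by omega))

theorem sum_mul_signVec_eq_zero {a : Fin N → ℚ}
    (ha : (∑ i, C (a i) * X i) ^ 2 ∈ Ideal.span (aPlusGenerators N)) (m : Fin N) :
    ∑ i, a i * signVec m i = 0 := by
  have hlin : (∑ i, C (a i) * X i).IsHomogeneous 1 :=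
    IsHomogeneous.sum _ _ _ fun i _ => isHomogeneous_C_mul_X (a i) i
  have h := aeval_signVec_mem_span_X_pow_three ha m
  rw [(hlin.pow 2).aeval_C_mul_X] at h
  simpa using Polynomial.eq_zero_of_C_mul_X_pow_mem_span_X_pow_succ h

theorem eq_zero_of_forall_sum_mul_signVec_eq_zero {a : Fin N → ℚ}
    (h : ∀ m, ∑ i, a i * signVec m i = 0) : a = 0 := by
  have ha : ∀ m ≠ 0, a m = 0 := by
    intro m hm
    have hdiff : ∑ i, a i * signVec m i - ∑ i, a i * signVec 0 i = 2 * a m := by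
      rw [← sum_sub_distrib, sum_eq_single m]
      · simp [signVec, hm]; ring
      · intro i _ him; simp [signVec, him]
      · simp
    linarith [h m, h 0]
  funext m
  rcases eq_or_ne m 0 with rfl | hm
  · have h0 := h 0
    rwa [sum_eq_single (0 : Fin N) (fun i _ hi => by rw [ha i hi, zero_mul]) (by simp), signVec,
      if_pos (Or.inl rfl), mul_one] at h0
  · exact ha m hm

end signVec

/-- Second half of the n = 3 case of Theorem 6.1: the ring 𝒜⁺ contains no non-zero
2-nilpotent homogeneous element of degree 1. -/
theorem stmt13 (aP : Ideal (MvPolynomial (Fin 6) ℚ))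
    (haP : aP = Ideal.span
      ({f | ∃ i j : Fin 6, f = X i ^ 2 - X j ^ 2} ∪
       {f | ∃ I : Finset (Fin 6), I.card = 4 ∧ (f = RI (X 0) I ∨ f = SI (X 0) I)} ∪
       {f | ∃ I : Finset (Fin 6), I.card = 3 ∧ (0 : Fin 6) ∈ I ∧
          (f = RI (X 0) I ∨ f = SI (X 0) I)})) :
    ∀ a : Fin 6 → ℚ, (∑ i, C (a i) * X i) ^ 2 ∈ aP → ∀ i, a i = 0 := by
  subst haP
  intro a ha
  exact congrFun (eq_zero_of_forall_sum_mul_signVec_eq_zero (sum_mul_signVec_eq_zero ha))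

end
end

section
/- Let n ≥ 3 and P = ℚ[X₁,…,X_{2n}]. Let 𝔟⁺ be the ideal of P generated by all Xᵢ² (i = 1,…,2n) and all e_{n−1}(Xᵢ : i ∈ {1} ∪ T) for subsets T ⊆ {2,…,2n} with |T| = n−1, where e_{n−1} is the elementary symmetric polynomial of degree n−1. Then for every subset J ⊆ {2,…,2n} with |J| = n−1, the element ∏_{j∈J} X_j + X₁ · ∑_{j∈J} ∏_{j'∈J∖{j}} X_{j'} lies in 𝔟⁺. -/
/-! The element is itself one of the generators of `b`: splitting the `(n-1)`-subsets of
`{0} ∪ J` according to whether they contain `0` gives `e_{n-1}(J) + X₀ · e_{n-2}(J)`, and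
since `#J = n - 1` these are `∏_{j ∈ J} X_j` and `∑_{j ∈ J} ∏_{J ∖ {j}} X`. -/

open MvPolynomial Finset

noncomputable section

theorem Finset.powersetCard_eq_image_erase {α : Type*} [DecidableEq α] {s : Finset α} {k : ℕ}
    (hs : #s = k + 1) : powersetCard k s = s.image s.erase := by
  ext t
  rw [mem_powersetCard, mem_image]
  constructor
  · rintro ⟨hts, rfl⟩
    obtain ⟨a, hat, rfl⟩ := exists_eq_insert_iff.2 ⟨hts, hs.symm⟩
    exact ⟨a, mem_insert_self a t, erase_insert hat⟩
  · rintro ⟨a, has, rfl⟩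
    exact ⟨erase_subset a s, by rw [card_erase_of_mem has, hs, Nat.add_sub_cancel]⟩

theorem esF_insert {N : ℕ} {a : Fin N} {I : Finset (Fin N)} (ha : a ∉ I) (k : ℕ) :
    esF (insert a I) (k + 1) = esF I (k + 1) + X a * esF I k := by
  have notMem {m : ℕ} {t : Finset (Fin N)} (ht : t ∈ powersetCard m I) : a ∉ t :=
    fun h => ha ((mem_powersetCard.1 ht).1 h)
  have hinj : Set.InjOn (insert a) (powersetCard k I : Set (Finset (Fin N))) :=
    fun s hs t ht hst => by
      rw [← erase_insert (notMem hs), hst, erase_insert (notMem ht)]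
  have hdisj : Disjoint (powersetCard (k + 1) I) ((powersetCard k I).image (insert a)) :=
    disjoint_left.2 fun s hs hs' => by
      obtain ⟨t, -, rfl⟩ := mem_image.1 hs'
      exact notMem hs (mem_insert_self a t)
  unfold esF
  rw [powersetCard_succ_insert ha, sum_union hdisj, sum_image hinj, mul_sum]
  exact congrArg _ (sum_congr rfl fun s hs => prod_insert (notMem hs))

theorem esF_card {N : ℕ} (I : Finset (Fin N)) : esF I #I = ∏ i ∈ I, X i := by
  rw [esF, powersetCard_self, sum_singleton]

theorem esF_of_card_eq_succ {N : ℕ} {I : Finset (Fin N)} {k : ℕ} (hI : #I = k + 1) :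
    esF I k = ∑ j ∈ I, ∏ i ∈ I.erase j, X i := by
  rw [esF, powersetCard_eq_image_erase hI, sum_image (erase_injOn I)]

/-- Step in the proof of Theorem 6.1: in ℬ⁺ every square-free monomial X_J with
J ⊆ {2,…,2n}, |J| = n−1, equals −X₁·∑_{j∈J} X_{J∖{j}}. -/
theorem stmt16 (n : ℕ) (hn : 3 ≤ n)
    (b : Ideal (MvPolynomial (Fin (2 * n)) ℚ))
    (hb : b = Ideal.span
      ({f | ∃ i : Fin (2 * n), f = X i ^ 2} ∪
       {f | ∃ T : Finset (Fin (2 * n)), (⟨0, by omega⟩ : Fin (2 * n)) ∉ T ∧ T.card = n - 1 ∧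
          f = esF (insert (⟨0, by omega⟩ : Fin (2 * n)) T) (n - 1)})) :
    ∀ J : Finset (Fin (2 * n)), (⟨0, by omega⟩ : Fin (2 * n)) ∉ J → J.card = n - 1 →
      ((∏ j ∈ J, X j) +
        X (⟨0, by omega⟩ : Fin (2 * n)) * ∑ j ∈ J, ∏ j' ∈ J.erase j, X j' :
          MvPolynomial (Fin (2 * n)) ℚ) ∈ b := by
  intro J hJ hcard
  subst hb
  refine Ideal.subset_span (Or.inr ⟨J, hJ, hcard, ?_⟩)
  obtain ⟨k, hk⟩ : ∃ k, n - 1 = k + 1 := ⟨n - 2, by omega⟩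
  rw [hk] at hcard ⊢
  rw [esF_insert hJ, ← hcard, esF_card, esF_of_card_eq_succ hcard]

end
end
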